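/- For every real polynomial map f : ℝⁿ → ℝⁿ whose components have total degree at most d, there exist matrices/parameters of a one-hidden-layer network with h = max(0, n·(C(n+d,d) − n − 1)) multiplicative hidden nodes, linear output layer, and direct input-output linear connections plus biases, such that the network function equals f exactly on all of ℝⁿ. -/

import Mathlib

/-!
A polynomial of degree at most `d` is its affine part plus a linear combination of the nonlinear
monomials of degree at most `d`. Each such monomial is one multiplicative hidden node, shared by
all outputs, and by stars and bars there are `C(n+d,d) - n - 1` of them, which is at most the
number of hidden nodes available.
-/

open MvPolynomial Finset

lemma Finset.exists_reindex_fin_sum {α ι R : Type*} [NonUnitalNonAssocSemiring R]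
    (s : Finset α) {h : ℕ} (hs : #s ≤ h) (a : α) (c : ι → α → R) :
    ∃ (e : Fin h → α) (w : ι → Fin h → R), (∀ l, e l ∈ s ∨ e l = a) ∧
      ∀ i (g : α → R), ∑ m ∈ s, c i m * g m = ∑ l, w i l * g (e l) := by
  obtain ⟨emb⟩ : Nonempty (s ↪ Fin h) :=
    Function.Embedding.nonempty_of_card_le (by simpa using hs)
  refine ⟨Function.extend emb Subtype.val fun _ => a, fun i => Function.extend emb (c i ∘ (↑)) 0,
    fun l => ?_, fun i g => ?_⟩
  · by_cases hl : ∃ m, emb m = l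
    · obtain ⟨m, rfl⟩ := hl
      simp [emb.injective.extend_apply]
    · simp [Function.extend_apply' _ _ _ hl]
  · rw [← sum_coe_sort]
    refine Fintype.sum_of_injective emb emb.injective _ _ (fun l hl => ?_) fun m => ?_
    · simp [Function.extend_apply' _ _ _ hl]
    · simp [emb.injective.extend_apply]

lemma Finsupp.sum_univ_eq_add_sum_tail {M : Type*} [AddCommMonoid M] {n : ℕ}
    (s : Fin (n + 1) →₀ M) : ∑ k, s k = s 0 + ∑ k, s.tail k := by
  simp [Fin.sum_univ_succ, Finsupp.tail_apply]

namespace PolyNet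

variable {n : ℕ}

/-- Homogenisation: the exponent vectors of degree exactly `d` in `n + 1` variables, with the
slack variable `0` dropped. -/
noncomputable def monomialsDegreeLE (n d : ℕ) : Finset (Fin n →₀ ℕ) :=
  (univ.finsuppAntidiag d : Finset (Fin (n + 1) →₀ ℕ)).image Finsupp.tail

lemma mem_monomialsDegreeLE {d : ℕ} {m : Fin n →₀ ℕ} :
    m ∈ monomialsDegreeLE n d ↔ ∑ k, m k ≤ d := by
  simp only [monomialsDegreeLE, mem_image, mem_finsuppAntidiag, subset_univ, and_true]
  constructor
  · rintro ⟨s, hs, rfl⟩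
    rw [Finsupp.sum_univ_eq_add_sum_tail] at hs
    omega
  · intro hm
    refine ⟨Finsupp.cons (d - ∑ k, m k) m, ?_, Finsupp.tail_cons _ _⟩
    rw [Finsupp.sum_univ_eq_add_sum_tail, Finsupp.cons_zero, Finsupp.tail_cons]
    omega

lemma card_monomialsDegreeLE (n d : ℕ) : #(monomialsDegreeLE n d) = (n + d).choose d := by
  rw [monomialsDegreeLE, card_image_of_injOn, card_finsuppAntidiag_nat_eq_choose, card_univ,
    Fintype.card_fin, Nat.add_right_comm, Nat.add_sub_cancel]
  intro s hs t ht hst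
  simp only [mem_coe, mem_finsuppAntidiag, subset_univ, and_true,
    Finsupp.sum_univ_eq_add_sum_tail] at hs ht
  have h0 : s 0 = t 0 := by rw [hst] at hs; omega
  rw [← Finsupp.cons_tail s, ← Finsupp.cons_tail t, h0, hst]

noncomputable def affineMonomials (n : ℕ) : Finset (Fin n →₀ ℕ) :=
  insert 0 (univ.image fun k => Finsupp.single k 1)

noncomputable def nonlinearMonomials (n d : ℕ) : Finset (Fin n →₀ ℕ) :=
  monomialsDegreeLE n d \ affineMonomials n

lemma card_affineMonomials (n : ℕ) : #(affineMonomials n) = n + 1 := by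
  rw [affineMonomials, card_insert_of_notMem (by simp),
    card_image_of_injective _ (Finsupp.single_left_injective one_ne_zero), card_univ,
    Fintype.card_fin]

lemma affineMonomials_subset_monomialsDegreeLE {d : ℕ} (hd : 1 ≤ d) :
    affineMonomials n ⊆ monomialsDegreeLE n d := by
  intro m hm
  rw [mem_monomialsDegreeLE]
  rcases mem_insert.1 hm with rfl | hm
  · simp
  · obtain ⟨k, -, rfl⟩ := mem_image.1 hm
    simpa [Finsupp.single_apply] using hd

lemma card_nonlinearMonomials (n d : ℕ) :
    #(nonlinearMonomials n d) = (n + d).choose d - n - 1 := by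
  rcases Nat.eq_zero_or_pos d with rfl | hd
  · suffices nonlinearMonomials n 0 = ∅ by simp [this]
    refine sdiff_eq_empty_iff_subset.2 fun m hm => ?_
    have hm0 : m = 0 := by
      ext k
      simpa using (Finset.sum_eq_zero_iff.1 (Nat.le_zero.1 (mem_monomialsDegreeLE.1 hm))) k
    simp [affineMonomials, hm0]
  · rw [nonlinearMonomials, card_sdiff_of_subset (affineMonomials_subset_monomialsDegreeLE hd),
      card_monomialsDegreeLE, card_affineMonomials, Nat.sub_add_eq]

lemma card_nonlinearMonomials_le (n d : ℕ) :
    #(nonlinearMonomials n d) ≤ n * ((n + d).choose d - n - 1) := by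
  rw [card_nonlinearMonomials]
  rcases Nat.eq_zero_or_pos n with rfl | hn
  · simp
  · exact Nat.le_mul_of_pos_left _ hn

section Evaluation

variable {R : Type*} [CommSemiring R]

lemma sum_affineMonomials (c : (Fin n →₀ ℕ) → R) (x : Fin n → R) :
    ∑ m ∈ affineMonomials n, c m * ∏ k, x k ^ m k = c 0 + ∑ k, c (Finsupp.single k 1) * x k := by
  rw [affineMonomials, sum_insert (by simp),
    sum_image fun _ _ _ _ h => Finsupp.single_left_injective one_ne_zero h]
  simp [Finsupp.single_apply, pow_ite]

lemma eval_eq_affine_add_sum_nonlinearMonomials {d : ℕ} {p : MvPolynomial (Fin n) R}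
    (hp : p.totalDegree ≤ d) (x : Fin n → R) :
    eval x p = coeff 0 p + ∑ k, coeff (Finsupp.single k 1) p * x k
      + ∑ m ∈ nonlinearMonomials n d, coeff m p * ∏ k, x k ^ m k := by
  have hsupp : p.support ⊆ affineMonomials n ∪ nonlinearMonomials n d := by
    intro m hm
    rw [nonlinearMonomials, union_sdiff_self_eq_union]
    refine mem_union_right _ (mem_monomialsDegreeLE.2 ?_)
    simpa [Finsupp.sum_fintype] using (le_totalDegree hm).trans hp
  rw [eval_eq', sum_subset hsupp fun m _ hm => by rw [notMem_support_iff.1 hm, zero_mul],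
    sum_union (by rw [nonlinearMonomials]; exact disjoint_sdiff), sum_affineMonomials]

end Evaluation

end PolyNet

open PolyNet

/-- Every polynomial map `f : ℝⁿ → ℝⁿ` of total degree at most `d` is exactly
represented by a one-hidden-layer PolyNet with `h = n * (C(n+d,d) - n - 1)`
multiplicative hidden nodes, a linear output layer, direct input-output linear
connections, and biases. -/
theorem polynet_exact_representation (n d : ℕ)
    (f : (Fin n → ℝ) → (Fin n → ℝ))
    (p : Fin n → MvPolynomial (Fin n) ℝ)
    (hdeg : ∀ i, (p i).totalDegree ≤ d)
    (hf : ∀ x i, f x i = MvPolynomial.eval x (p i)) :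
    ∃ (a0 : Fin n → ℝ)                                 -- output biases
      (a1 : Fin n → Fin n → ℝ)                          -- direct input-output weights
      (w : Fin n → Fin (n * ((n + d).choose d - n - 1)) → ℝ)  -- hidden-output weights
      (E : Fin (n * ((n + d).choose d - n - 1)) → Fin n → ℕ), -- hidden-node exponents
      (∀ l, ∑ k, E l k ≤ d) ∧
      ∀ x i, f x i = a0 i + ∑ k, a1 i k * x k
        + ∑ l, w i l * ∏ k, x k ^ E l k := by
  obtain ⟨E, w, hE, hw⟩ := (nonlinearMonomials n d).exists_reindex_fin_sum
    (card_nonlinearMonomials_le n d) 0 fun i m => coeff m (p i)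
  refine ⟨fun i => coeff 0 (p i), fun i k => coeff (Finsupp.single k 1) (p i), w, fun l => E l,
    fun l => ?_, fun x i => ?_⟩
  · rcases hE l with hl | hl
    · exact mem_monomialsDegreeLE.1 (mem_sdiff.1 hl).1
    · simp [hl]
  · rw [hf, eval_eq_affine_add_sum_nonlinearMonomials (hdeg i), hw i fun m => ∏ k, x k ^ m k]
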